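/- Let k > 0, t₀ ∈ ℝ, and θ₀ ∈ (−π/2, 0). Let θ be the solution of θ'(t) = k·sin(θ(t)) with θ(t₀) = θ₀. Then there exists a finite time t₁ = t₀ + (1/k)·ln(csc(|θ₀|) + cot(|θ₀|)) > t₀ such that θ(t₁) = −π/2. -/

import Mathlib

/-! The substitution `u = tan (θ / 2)` turns `θ' = k sin θ` into `u' = k u`, so the solution is
`θ t = 2 arctan (tan (θ₀ / 2) · exp (k (t - t₀)))`, by uniqueness for the Lipschitz field `k sin`.
Since `csc φ + cot φ = cot (φ / 2)`, at `t₁` the argument of `arctan` is `-1`, giving `θ t₁ = -π/2`. -/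

open Real

theorem Real.sin_two_mul_arctan (x : ℝ) : sin (2 * arctan x) = 2 * x / (1 + x ^ 2) := by
  simpa using sin_eq_two_mul_tan_half_div_one_add_tan_half_sq (2 * arctan x)

theorem Real.one_div_sin_add_cos_div_sin_eq_inv_tan_half {x : ℝ} (hx : cos x ≠ -1) :
    1 / sin x + cos x / sin x = (tan (x / 2))⁻¹ := by
  rw [sin_eq_two_mul_tan_half_div_one_add_tan_half_sq x,
    cos_eq_two_mul_tan_half_div_one_sub_tan_half_sq x hx]
  rcases eq_or_ne (tan (x / 2)) 0 with h | h
  · simp [h]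
  · field_simp
    ring

theorem Real.lipschitzWith_const_mul_sin (k : ℝ) : LipschitzWith ‖k‖₊ (fun x => k * sin x) :=
  LipschitzWith.of_dist_le_mul fun x y => by
    rw [dist_eq, ← mul_sub, abs_mul, coe_nnnorm, norm_eq_abs, ← dist_eq]
    gcongr
    simpa using lipschitzWith_sin.dist_le_mul x y

theorem hasDerivAt_two_mul_arctan_mul_exp (k c t₀ t : ℝ) :
    HasDerivAt (fun t => 2 * arctan (c * exp (k * (t - t₀))))
      (k * sin (2 * arctan (c * exp (k * (t - t₀))))) t := by
  have hu : HasDerivAt (fun t => c * exp (k * (t - t₀))) (k * (c * exp (k * (t - t₀)))) t := by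
    refine (((hasDerivAt_id t).sub_const t₀).const_mul k).exp.const_mul c |>.congr_deriv ?_
    simp only [id, mul_one]
    ring
  refine (hu.arctan.const_mul 2).congr_deriv ?_
  rw [sin_two_mul_arctan]
  field_simp

theorem eqOn_of_hasDerivAt_const_mul_sin {k a b : ℝ} {f g : ℝ → ℝ}
    (hf : ∀ t ∈ Set.Icc a b, HasDerivAt f (k * sin (f t)) t)
    (hg : ∀ t ∈ Set.Icc a b, HasDerivAt g (k * sin (g t)) t) (ha : f a = g a) :
    Set.EqOn f g (Set.Icc a b) :=
  ODE_solution_unique (v := fun _ x => k * sin x) (fun _ => lipschitzWith_const_mul_sin k)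
    (fun t ht => (hf t ht).continuousAt.continuousWithinAt)
    (fun t ht => (hf t (Set.Ico_subset_Icc_self ht)).hasDerivWithinAt)
    (fun t ht => (hg t ht).continuousAt.continuousWithinAt)
    (fun t ht => (hg t (Set.Ico_subset_Icc_self ht)).hasDerivWithinAt) ha

/-- Instability for negative bare mass: a solution of `θ' = k sin θ` (`k = a²/(2|m|) > 0`)
starting at `θ₀ ∈ (−π/2, 0)` reaches `−π/2` at the finite time
`t₁ = t₀ + (1/k)·ln(csc|θ₀| + cot|θ₀|)`. -/
theorem theta_reaches_neg_pi_div_two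
    (k t₀ θ₀ t₁ : ℝ) (hk : 0 < k) (hθ₀ : θ₀ ∈ Set.Ioo (-(π / 2)) 0)
    (ht₁ : t₁ = t₀ + (1 / k) * Real.log (1 / sin |θ₀| + cos |θ₀| / sin |θ₀|))
    (θ : ℝ → ℝ) (hinit : θ t₀ = θ₀)
    (hode : ∀ t ∈ Set.Icc t₀ t₁, HasDerivAt θ (k * sin (θ t)) t) :
    t₀ < t₁ ∧ θ t₁ = -(π / 2) := by
  obtain ⟨hθ₀l, hθ₀r⟩ := hθ₀
  have habs : |θ₀| = -θ₀ := abs_of_neg hθ₀r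
  set τ := tan (|θ₀| / 2)
  have hτ0 : 0 < τ := tan_pos_of_pos_of_lt_pi_div_two (by linarith) (by linarith [pi_pos])
  have hτ1 : τ < 1 := by
    rw [← tan_pi_div_four]
    exact tan_lt_tan_of_lt_of_lt_pi_div_two (by linarith) (by linarith [pi_pos]) (by linarith)
  have hcos : cos |θ₀| ≠ -1 := by
    linarith [cos_pos_of_mem_Ioo (x := |θ₀|) ⟨by linarith, by linarith⟩]
  have hkt : k * (t₁ - t₀) = Real.log τ⁻¹ := by
    rw [ht₁, one_div_sin_add_cos_div_sin_eq_inv_tan_half hcos]; field_simp; ring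
  have ht₀t₁ : t₀ < t₁ := by
    have : 0 < k * (t₁ - t₀) := hkt ▸ log_pos ((one_lt_inv₀ hτ0).2 hτ1)
    nlinarith
  set ψ := fun t => 2 * arctan (-τ * exp (k * (t - t₀)))
  have hψt₀ : ψ t₀ = θ₀ := by
    simp only [ψ, sub_self, mul_zero, exp_zero, mul_one, τ, habs, neg_div, tan_neg, neg_neg]
    rw [arctan_tan (by linarith) (by linarith)]; ring
  have hψt₁ : ψ t₁ = -(π / 2) := by
    simp only [ψ, hkt, exp_log (inv_pos.2 hτ0), neg_mul, mul_inv_cancel₀ hτ0.ne', arctan_neg,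
      arctan_one]
    ring
  have hθψ := eqOn_of_hasDerivAt_const_mul_sin hode
    (fun t _ => hasDerivAt_two_mul_arctan_mul_exp k (-τ) t₀ t) (hinit.trans hψt₀.symm)
  exact ⟨ht₀t₁, (hθψ ⟨ht₀t₁.le, le_rfl⟩).trans hψt₁⟩
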